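/- Let V, W be finite-dimensional symplectic vector spaces, Γ ⊂ V × W⁻ Lagrangian, Σ ⊂ W isotropic, and assume { w ∈ Σ : (0,w) ∈ Γ } = {0}. Define ρ : Γ ⊕ Σ → W by ρ((v,w), w₁) = w − w₁, and U₁ := { w ∈ Σ^⊥ : (0,w) ∈ Γ }. Then the image of ρ equals U₁^⊥ (the symplectic orthogonal of U₁ in W), and the kernel of ρ is linearly isomorphic to Γ∘Σ. In particular there is a short exact sequence 0 → Γ∘Σ → Γ ⊕ Σ → U₁^⊥ → 0. -/

import Mathlib

open Module LinearMap

noncomputable def prodNegForm {V W : Type*} [AddCommGroup V] [Module ℝ V]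
    [AddCommGroup W] [Module ℝ W]
    (ωV : LinearMap.BilinForm ℝ V) (ωW : LinearMap.BilinForm ℝ W) :
    LinearMap.BilinForm ℝ (V × W) :=
  (ωV.comp (LinearMap.fst ℝ V W) (LinearMap.fst ℝ V W)) -
  (ωW.comp (LinearMap.snd ℝ V W) (LinearMap.snd ℝ V W))

noncomputable def relComp {V W : Type*} [AddCommGroup V] [Module ℝ V]
    [AddCommGroup W] [Module ℝ W]
    (Γ : Submodule ℝ (V × W)) (S : Submodule ℝ W) : Submodule ℝ V :=
  Submodule.map (LinearMap.fst ℝ V W) (Γ ⊓ Submodule.prod ⊤ S)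

/-- The map `ρ : Γ ⊕ Σ → W`, `ρ((v,w), w₁) = w − w₁`. -/
noncomputable def rhoMap {V W : Type*} [AddCommGroup V] [Module ℝ V]
    [AddCommGroup W] [Module ℝ W]
    (Γ : Submodule ℝ (V × W)) (S : Submodule ℝ W) : (Γ × S) →ₗ[ℝ] W :=
  ((LinearMap.snd ℝ V W).comp (Γ.subtype.comp (LinearMap.fst ℝ Γ S))) -
    (S.subtype.comp (LinearMap.snd ℝ Γ S))

lemma prodNegForm_apply {V W : Type*} [AddCommGroup V] [Module ℝ V]
    [AddCommGroup W] [Module ℝ W]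
    (ωV : LinearMap.BilinForm ℝ V) (ωW : LinearMap.BilinForm ℝ W)
    (p q : V × W) : prodNegForm ωV ωW p q = ωV p.1 q.1 - ωW p.2 q.2 := by
  simp [prodNegForm]

lemma rhoMap_apply {V W : Type*} [AddCommGroup V] [Module ℝ V]
    [AddCommGroup W] [Module ℝ W]
    (Γ : Submodule ℝ (V × W)) (S : Submodule ℝ W) (x : Γ × S) :
    rhoMap Γ S x = (x.1 : V × W).2 - (x.2 : W) := by
  simp [rhoMap]

/-- With `Γ ⊂ V × W⁻` Lagrangian, `Σ ⊂ W` isotropic and `{w ∈ Σ : (0,w) ∈ Γ} = {0}`: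
the image of `ρ : Γ ⊕ Σ → W`, `ρ((v,w),w₁) = w − w₁`, equals the symplectic orthogonal
`U₁^⊥` of `U₁ = { w ∈ Σ^⊥ : (0,w) ∈ Γ }`, and the kernel of `ρ` is linearly isomorphic
to `Γ∘Σ`; in particular `0 → Γ∘Σ → Γ ⊕ Σ → U₁^⊥ → 0` is exact. -/
theorem rho_exact_sequence
    {V W : Type*} [AddCommGroup V] [Module ℝ V] [FiniteDimensional ℝ V]
    [AddCommGroup W] [Module ℝ W] [FiniteDimensional ℝ W]
    (ωV : LinearMap.BilinForm ℝ V) (ωW : LinearMap.BilinForm ℝ W)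
    (hValt : ∀ v, ωV v v = 0) (hWalt : ∀ w, ωW w w = 0)
    (hVnd : ∀ v, (∀ v', ωV v v' = 0) → v = 0)
    (hWnd : ∀ w, (∀ w', ωW w w' = 0) → w = 0)
    (Γ : Submodule ℝ (V × W))
    (hΓiso : ∀ p ∈ Γ, ∀ q ∈ Γ, prodNegForm ωV ωW p q = 0)
    (hΓlag : 2 * finrank ℝ Γ = finrank ℝ V + finrank ℝ W)
    (S : Submodule ℝ W) (hSiso : ∀ w₁ ∈ S, ∀ w₂ ∈ S, ωW w₁ w₂ = 0)
    (hker : ∀ w ∈ S, (0, w) ∈ Γ → w = 0) :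
    LinearMap.range (rhoMap Γ S)
        = ωW.orthogonal (ωW.orthogonal S ⊓ Submodule.comap (LinearMap.inr ℝ V W) Γ) ∧
      Nonempty (LinearMap.ker (rhoMap Γ S) ≃ₗ[ℝ] relComp Γ S) := by
  have hWrefl : ωW.IsRefl := LinearMap.IsAlt.isRefl hWalt
  have hWnd' : ωW.Nondegenerate := hWrefl.nondegenerate_iff_separatingLeft.mpr hWnd
  set B := prodNegForm ωV ωW with hB
  have hBalt : B.IsAlt := by
    intro p
    rw [prodNegForm_apply]
    rw [hValt, hWalt, sub_zero]
  have hBrefl : B.IsRefl := LinearMap.IsAlt.isRefl hBalt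
  have hBnd : B.Nondegenerate := by
    refine (LinearMap.IsRefl.nondegenerate_iff_separatingLeft hBrefl).mpr ?_
    intro p hp
    have h1 : p.1 = 0 := by
      apply hVnd
      intro v'
      have := hp (v', 0)
      rw [prodNegForm_apply] at this
      simpa using this
    have h2 : p.2 = 0 := by
      apply hWnd
      intro w'
      have := hp (0, w')
      rw [prodNegForm_apply] at this
      simp at this
      linarith [this]
    exact Prod.ext h1 h2
  -- Γ is equal to its own orthogonal
  have hΓle : Γ ≤ B.orthogonal Γ := by
    intro p hp
    rw [LinearMap.BilinForm.mem_orthogonal_iff]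
    intro q hq
    exact hΓiso q hq p hp
  have hΓeq : Γ = B.orthogonal Γ := by
    apply Submodule.eq_of_le_of_finrank_le hΓle
    rw [LinearMap.BilinForm.finrank_orthogonal hBnd Γ]
    have h1 : finrank ℝ (V × W) = finrank ℝ V + finrank ℝ W := finrank_prod ..
    omega
  set U₁ := ωW.orthogonal S ⊓ Submodule.comap (LinearMap.inr ℝ V W) Γ with hU₁
  constructor
  · -- range equality
    have hle : LinearMap.range (rhoMap Γ S) ≤ ωW.orthogonal U₁ := by
      rintro x ⟨⟨⟨p, hp⟩, ⟨w₁, hw₁⟩⟩, rfl⟩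
      rw [LinearMap.BilinForm.mem_orthogonal_iff]
      rintro u ⟨huS, huΓ⟩
      rw [rhoMap_apply]
      have h1 : ωW u p.2 = 0 := by
        have := hΓiso (0, u) huΓ p hp
        rw [prodNegForm_apply] at this
        simp at this
        linarith
      have h2 : ωW u w₁ = 0 := hWrefl _ _ (huS w₁ hw₁)
      simp only [LinearMap.BilinForm.IsOrtho, map_sub, h1, h2, sub_zero]
    have hge : ωW.orthogonal (LinearMap.range (rhoMap Γ S)) ≤ U₁ := by
      intro u hu
      rw [LinearMap.BilinForm.mem_orthogonal_iff] at hu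
      refine Submodule.mem_inf.mpr ⟨?_, ?_⟩
      · -- u ∈ ωW.orthogonal S
        intro s hs
        have hmem : (-s : W) ∈ LinearMap.range (rhoMap Γ S) := by
          exact ⟨(0, ⟨s, hs⟩), by rw [rhoMap_apply]; simp⟩
        have := hu _ hmem
        simpa [LinearMap.BilinForm.IsOrtho] using this
      · -- (0, u) ∈ Γ
        rw [Submodule.mem_comap]
        show ((0 : V), u) ∈ Γ
        rw [hΓeq, LinearMap.BilinForm.mem_orthogonal_iff]
        rintro ⟨v, w⟩ hvw
        have hmem : w ∈ LinearMap.range (rhoMap Γ S) :=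
          ⟨(⟨(v, w), hvw⟩, 0), by rw [rhoMap_apply]; simp⟩
        have := hu _ hmem
        rw [prodNegForm_apply]
        simpa using this
    refine le_antisymm hle ?_
    have := LinearMap.BilinForm.orthogonal_le hge (B := ωW)
    rwa [LinearMap.BilinForm.orthogonal_orthogonal hWnd' hWrefl] at this
  · -- kernel isomorphism
    refine ⟨LinearEquiv.ofBijective (LinearMap.codRestrict (relComp Γ S)
      (((LinearMap.fst ℝ V W).comp (Γ.subtype.comp (LinearMap.fst ℝ Γ S))).comp
        (LinearMap.ker (rhoMap Γ S)).subtype) ?_) ⟨?_, ?_⟩⟩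
    · rintro ⟨⟨⟨p, hp⟩, ⟨w₁, hw₁⟩⟩, hmem⟩
      rw [LinearMap.mem_ker, rhoMap_apply] at hmem
      simp only [LinearMap.comp_apply, Submodule.subtype_apply, LinearMap.fst_apply]
      exact ⟨p, ⟨hp, ⟨trivial, by simp only [sub_eq_zero] at hmem; rw [hmem]; exact hw₁⟩⟩, rfl⟩
    · rintro ⟨⟨⟨p, hp⟩, ⟨w₁, hw₁⟩⟩, hmem⟩ ⟨⟨⟨q, hq⟩, ⟨w₂, hw₂⟩⟩, hmem'⟩ heq
      rw [LinearMap.mem_ker, rhoMap_apply] at hmem hmem'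
      simp only [sub_eq_zero] at hmem hmem'
      have h1 : p.1 = q.1 := congrArg Subtype.val heq
      -- show p = q and w₁ = w₂
      have hpq : p = q := by
        have : p - q = 0 := by
          have hd : (p - q) ∈ Γ := Submodule.sub_mem Γ hp hq
          have h2 : p.2 - q.2 ∈ S := Submodule.sub_mem S (hmem ▸ hw₁) (hmem' ▸ hw₂)
          have := hker (p.2 - q.2) h2 (by
            have : p - q = (0, p.2 - q.2) := Prod.ext (by simp [h1]) rfl
            rwa [this] at hd)
          exact Prod.ext (by simp [h1]) (by simpa [sub_eq_zero] using this)
        rwa [sub_eq_zero] at this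
      have hw : w₁ = w₂ := by rw [← hmem, ← hmem', hpq]
      exact Subtype.ext (Prod.ext (Subtype.ext hpq) (Subtype.ext hw))
    · rintro ⟨v, ⟨p, ⟨hpΓ, ⟨-, hpS⟩⟩, rfl⟩⟩
      refine ⟨⟨(⟨p, hpΓ⟩, ⟨p.2, hpS⟩), ?_⟩, rfl⟩
      rw [LinearMap.mem_ker, rhoMap_apply]
      simp
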